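/- For all integers t, r, Δ with 1 ≤ t ≤ r and Δ ≥ 2, there exist a t-simple, r-partite r-graph G with maximum degree Δ and an edge-coloring of G into color classes E_1, …, E_n such that |E_i| ≥ r(Δ−1) + t − 1 for every i and G has no full rainbow matching with respect to E_1, …, E_n. -/

import Mathlib

open Finset

/-- The degree of a vertex `v` in the multi-hypergraph with edge family `E`
(edges indexed by `ι`, parallel edges counted as distinct). -/
def mhDeg {V ι : Type} [Fintype ι] [DecidableEq V] (E : ι → Finset V) (v : V) : ℕ :=
  (Finset.univ.filter fun a => v ∈ E a).card

/-- The size of the color class of color `i` under the edge-coloring `c`. -/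
def classSize {ι κ : Type} [Fintype ι] [DecidableEq κ] (c : ι → κ) (i : κ) : ℕ :=
  (Finset.univ.filter fun a => c a = i).card

/-- An edge-coloring is proper if each color class is a matching. -/
def properColoring {V ι κ : Type} (E : ι → Finset V) (c : ι → κ) : Prop :=
  ∀ a b : ι, a ≠ b → c a = c b → Disjoint (E a) (E b)

/-- A full rainbow matching with respect to the coloring `c`: a set of pairwise disjoint
edges containing exactly one edge from each color class. -/
def hasFullRainbowMatching {V ι κ : Type} (E : ι → Finset V) (c : ι → κ) : Prop :=
  ∃ f : κ → ι, (∀ i, c (f i) = i) ∧ ∀ i j : κ, i ≠ j → Disjoint (E (f i)) (E (f j))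

/-!
Take `s = r(Δ-1)+t-1` disjoint gadgets. A gadget has `t` pairwise disjoint rows and `r(Δ-1)`
columns, every column meeting every row, so a matching uses rows or columns of a gadget but not
both. With colours `0, …, s`, the columns of gadget `γ` get colour `γ` and its first `t-1` rows
colour `γ+1`; its last row gets colour `t-1` if `γ < t-1` and `s` otherwise. The exception is the
root gadget `t-1`, whose columns are split between the colours `0` and `t-1`.

A full rainbow matching avoiding the rows of the root forces colours `t, t+1, …, s-1` onto
columns of their own gadgets, which leaves no edge for colour `s`. One that uses a root row
forces colours `0, …, t-2` onto columns of their own gadgets, which leaves no edge for colour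
`t-1`.
-/

section Relabel

variable {V ι κ V' ι' : Type}

lemma mhDeg_relabel [Fintype ι] [Fintype ι'] [DecidableEq V] [DecidableEq V']
    (E : ι → Finset V) (eι : ι ≃ ι') (eV : V ≃ V') (v : V') :
    mhDeg (fun a => (E (eι.symm a)).map eV.toEmbedding) v = mhDeg E (eV.symm v) := by
  simp only [mhDeg, ← Fintype.card_subtype]
  exact Fintype.card_congr (eι.symm.subtypeEquiv fun a => by rw [mem_map_equiv])

lemma classSize_relabel [Fintype ι] [Fintype ι'] [DecidableEq κ] (c : ι → κ)
    (eι : ι ≃ ι') (i : κ) : classSize (fun a => c (eι.symm a)) i = classSize c i := by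
  simp only [classSize, ← Fintype.card_subtype]
  exact Fintype.card_congr (eι.symm.subtypeEquiv fun _ => Iff.rfl)

lemma hasFullRainbowMatching.of_relabel {E : ι → Finset V} {c : ι → κ} (eι : ι ≃ ι')
    (eV : V ≃ V')
    (h : hasFullRainbowMatching (fun a => (E (eι.symm a)).map eV.toEmbedding)
      (fun a => c (eι.symm a))) :
    hasFullRainbowMatching E c := by
  obtain ⟨f, hcol, hdisj⟩ := h
  exact ⟨fun i => eι.symm (f i), hcol, fun i j hij => (disjoint_map _).1 (hdisj i j hij)⟩

def IsCounterexample (r t Δ : ℕ) [Fintype ι] [DecidableEq V] [DecidableEq κ]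
    (E : ι → Finset V) (c : ι → κ) : Prop :=
  (∀ a, (E a).card = r) ∧
  (∀ a b, a ≠ b → (E a ∩ E b).card ≤ t) ∧
  (∃ P : V → Fin r, ∀ a, ∀ u ∈ E a, ∀ v ∈ E a, u ≠ v → P u ≠ P v) ∧
  (∀ v, mhDeg E v ≤ Δ) ∧ (∃ v, mhDeg E v = Δ) ∧
  (∀ i, r * (Δ - 1) + t - 1 ≤ classSize c i) ∧
  ¬ hasFullRainbowMatching E c

lemma IsCounterexample.relabel {r t Δ : ℕ} [Fintype ι] [Fintype ι'] [DecidableEq V]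
    [DecidableEq V'] [DecidableEq κ] {E : ι → Finset V} {c : ι → κ}
    (h : IsCounterexample r t Δ E c) (eι : ι ≃ ι') (eV : V ≃ V') :
    IsCounterexample r t Δ (fun a => (E (eι.symm a)).map eV.toEmbedding)
      (fun a => c (eι.symm a)) := by
  obtain ⟨hcard, hsimple, ⟨P, hP⟩, hdeg, ⟨v, hv⟩, hclass, hfree⟩ := h
  refine ⟨fun a => by rw [card_map, hcard], fun a b hab => ?_, ⟨P ∘ eV.symm, ?_⟩,
    fun v => by rw [mhDeg_relabel]; exact hdeg _,
    ⟨eV v, by rw [mhDeg_relabel, eV.symm_apply_apply, hv]⟩,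
    fun i => by rw [classSize_relabel]; exact hclass i, fun hm => hfree (hm.of_relabel eι eV)⟩
  · rw [← map_inter, card_map]
    exact hsimple _ _ (eι.symm.injective.ne hab)
  · intro a u hu w hw huw
    rw [mem_map_equiv] at hu hw
    exact hP _ _ hu _ hw (eV.symm.injective.ne huw)

end Relabel

namespace RainbowGadget

/-- The edge `(γ, .inl i)` is row `i` of gadget `γ`, and `(γ, .inr (l, d))` is a column. -/
abbrev Edge (s t r q : ℕ) := Fin s × (Fin t ⊕ Fin r × Fin q)

abbrev Vertex (s t r q : ℕ) := Edge s t r q × Fin r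

variable {s t r q : ℕ}

/-- A vertex `(e, j)` is the vertex in part `j` owned by the edge `e`. A row owns all its
vertices; the column `(l, d)` passes through the vertex of row `j - l` in each part `j` with
`j - l < t` and owns its vertices in the other parts. So every row vertex lies on its row and on
`q` columns, and the pairs `(e, j)` owned by no edge are isolated vertices. -/
def owner : Edge s t r q → Fin r → Edge s t r q
  | (γ, .inl i), _ => (γ, .inl i)
  | (γ, .inr c), j => if h : (j - c.1).val < t then (γ, .inl ⟨_, h⟩) else (γ, .inr c)

def edge (e : Edge s t r q) : Finset (Vertex s t r q) :=
  univ.image fun j => (owner e j, j)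

lemma mem_edge {e e' : Edge s t r q} {j : Fin r} : (e', j) ∈ edge e ↔ owner e j = e' := by
  simp [edge]

lemma card_edge (e : Edge s t r q) : (edge e).card = r := by
  rw [edge, card_image_of_injective _ fun j j' h => congrArg Prod.snd h, card_univ,
    Fintype.card_fin]

lemma owner_eq_self_or_row (e : Edge s t r q) (j : Fin r) :
    owner e j = e ∨ ∃ i, owner e j = (e.1, .inl i) := by
  obtain ⟨γ, i | c⟩ := e
  · exact .inl rfl
  · simp only [owner]
    split_ifs
    exacts [.inr ⟨_, rfl⟩, .inl rfl]

lemma owner_col_eq_row_iff [NeZero r] (htr : t ≤ r) {γ γ' : Fin s} {c : Fin r × Fin q}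
    {i : Fin t} {j : Fin r} :
    owner ((γ, .inr c) : Edge s t r q) j = (γ', .inl i) ↔
      γ = γ' ∧ c.1 = j - Fin.castLE htr i := by
  have key : (j - c.1).val = i.val ↔ c.1 = j - Fin.castLE htr i := by
    rw [eq_sub_iff_add_eq, add_comm, ← eq_sub_iff_add_eq, Fin.ext_iff, Fin.val_castLE, eq_comm]
  simp only [owner]
  split_ifs with h
  · simp only [Prod.mk.injEq, Sum.inl.injEq, ← key]
    exact and_congr_right fun _ => Fin.ext_iff
  · simp only [Prod.mk.injEq, reduceCtorEq, and_false, false_iff, not_and]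
    exact fun _ hc => h (by rw [key.2 hc]; exact i.2)

lemma lt_of_owner_col_eq {γ : Fin s} {c : Fin r × Fin q} {b : Edge s t r q}
    (hb : (γ, .inr c) ≠ b) {j : Fin r} (h : owner (γ, .inr c) j = owner b j) :
    (j - c.1).val < t := by
  by_contra hj
  have hself : owner ((γ, .inr c) : Edge s t r q) j = (γ, .inr c) := by simp [owner, hj]
  rcases owner_eq_self_or_row b j with hb' | ⟨i, hi⟩
  · exact hb (hself.symm.trans (h.trans hb'))
  · rw [hself, hi] at h
    simp at h

lemma card_edge_col_inter_le {γ : Fin s} {c : Fin r × Fin q} {b : Edge s t r q}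
    (hb : (γ, .inr c) ≠ b) : (edge (γ, .inr c) ∩ edge b).card ≤ t := by
  have : NeZero r := .of_pos c.1.pos
  calc (edge (γ, .inr c) ∩ edge b).card ≤ #{j : Fin r | (j - c.1).val < t} := by
        refine card_le_card_of_injOn Prod.snd (fun v hv => ?_) (fun v hv w hw hvw => ?_)
        · obtain ⟨e, j⟩ := v
          rw [coe_inter, Set.mem_inter_iff, mem_coe, mem_coe, mem_edge, mem_edge] at hv
          simpa using lt_of_owner_col_eq hb (hv.1.trans hv.2.symm)
        · obtain ⟨e, j⟩ := v
          obtain ⟨e', j'⟩ := w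
          simp only [coe_inter, Set.mem_inter_iff, mem_coe, mem_edge] at hv hw hvw
          subst hvw
          rw [← hv.1, ← hw.1]
    _ ≤ #{u : Fin r | u.val < t} :=
        card_le_card_of_injOn (· - c.1) (fun j hj => by simpa using hj) sub_left_injective.injOn
    _ ≤ t := by rw [Fin.card_filter_val_lt]; exact min_le_right _ _

lemma card_edge_inter_le {a b : Edge s t r q} (hab : a ≠ b) : (edge a ∩ edge b).card ≤ t := by
  obtain ⟨γ, i | c⟩ := a
  · obtain ⟨δ, i' | c'⟩ := b
    · have : edge (γ, .inl i) ∩ edge ((δ, .inl i') : Edge s t r q) = ∅ := by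
        refine eq_empty_of_forall_notMem fun ⟨e, j⟩ hv => hab ?_
        rw [mem_inter, mem_edge, mem_edge] at hv
        exact hv.1.trans hv.2.symm
      simp [this]
    · rw [inter_comm]
      exact card_edge_col_inter_le hab.symm
  · exact card_edge_col_inter_le hab

lemma mhDeg_row [NeZero r] (htr : t ≤ r) (γ : Fin s) (i : Fin t) (j : Fin r) :
    mhDeg (edge (q := q)) ((γ, .inl i), j) = q + 1 := by
  have hfilter : univ.filter (fun e : Edge s t r q => ((γ, .inl i), j) ∈ edge e) =
      insert (γ, .inl i) (univ.image fun d => (γ, .inr (j - Fin.castLE htr i, d))) := by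
    ext ⟨γ', i' | c⟩
    · simp [mem_edge, owner, eq_comm]
    · simp only [mem_filter, mem_univ, true_and, mem_edge, owner_col_eq_row_iff htr, mem_insert,
        mem_image]
      aesop
  rw [mhDeg, hfilter, card_insert_of_notMem (by simp), card_image_of_injective _
    (fun d d' h => by simpa using h), card_univ, Fintype.card_fin]

lemma eq_of_owner_eq_col {e : Edge s t r q} {j : Fin r} {γ : Fin s} {c : Fin r × Fin q}
    (h : owner e j = (γ, .inr c)) : e = (γ, .inr c) := by
  rcases owner_eq_self_or_row e j with he | ⟨i, hi⟩
  · rwa [← he]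
  · rw [hi] at h
    simp at h

lemma mhDeg_col_le (γ : Fin s) (c : Fin r × Fin q) (j : Fin r) :
    mhDeg (edge (t := t)) ((γ, .inr c), j) ≤ 1 := by
  refine card_le_one.2 fun a ha b hb => ?_
  simp only [mem_filter, mem_univ, true_and, mem_edge] at ha hb
  rw [eq_of_owner_eq_col ha, eq_of_owner_eq_col hb]

lemma not_disjoint_edge_row_col [NeZero r] (htr : t ≤ r) (γ : Fin s) (i : Fin t)
    (c : Fin r × Fin q) : ¬ Disjoint (edge (γ, .inl i)) (edge (γ, .inr c)) := by
  refine not_disjoint_iff.2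
    ⟨((γ, .inl i), c.1 + Fin.castLE htr i), mem_edge.2 rfl, mem_edge.2 ?_⟩
  rw [owner_col_eq_row_iff htr, add_sub_cancel_right]
  exact ⟨rfl, rfl⟩

def colour : Edge s t r q → ℕ
  | (γ, .inl i) => if i.val < t - 1 then γ + 1 else if γ.val < t - 1 then t - 1 else s
  | (γ, .inr c) =>
      if γ.val = t - 1 then (if c.2.val = 0 ∧ c.1.val < t - 1 then 0 else t - 1) else γ

lemma colour_lt (hts : t ≤ s) (e : Edge s t r q) : colour e < s + 1 := by
  obtain ⟨γ, i | c⟩ := e <;> have := γ.2 <;> simp only [colour] <;> split_ifs <;> omega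

def colourFin (hts : t ≤ s) (e : Edge s t r q) : Fin (s + 1) := ⟨colour e, colour_lt hts e⟩

section ColourClasses

variable {e : Edge s t r q} {x : ℕ}

lemma colour_eq_cases (hx0 : x ≠ 0) (hx : x ≠ t - 1) (hxs : x < s) (he : colour e = x) :
    (e.2.isRight ∧ e.1.val = x) ∨ (e.2.isLeft ∧ e.1.val + 1 = x) := by
  obtain ⟨γ, i | c⟩ := e <;> simp only [colour] at he <;> split_ifs at he <;> simp <;> omega

lemma colour_eq_zero_cases (he : colour e = 0) :
    e.2.isRight ∧ (e.1.val = 0 ∨ e.1.val = t - 1) := by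
  obtain ⟨γ, i | c⟩ := e <;> simp only [colour] at he <;> split_ifs at he <;> simp <;> omega

lemma colour_eq_root_cases (he : colour e = t - 1) :
    (e.2.isRight ∧ e.1.val = t - 1) ∨ (e.2.isLeft ∧ e.1.val < t - 1) := by
  obtain ⟨γ, i | c⟩ := e <;> simp only [colour] at he <;> split_ifs at he <;> simp <;> omega

lemma colour_eq_last_cases (hts : t ≤ s) (he : colour e = s) :
    e.2.isLeft ∧ t - 1 ≤ e.1.val := by
  obtain ⟨γ, i | c⟩ := e <;> simp only [colour] at he <;> split_ifs at he <;> simp <;> omega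

end ColourClasses

def AvoidsRowsOf (f : Fin (s + 1) → Edge s t r q) (g : ℕ) : Prop :=
  ∀ x, (f x).2.isLeft → (f x).1.val ≠ g

section NoRainbowMatching

variable [NeZero r] {f : Fin (s + 1) → Edge s t r q}

lemma false_of_row_of_col (htr : t ≤ r)
    (hdisj : ∀ x y, x ≠ y → Disjoint (edge (f x)) (edge (f y))) {x y : Fin (s + 1)}
    (hx : (f x).2.isLeft) (hy : (f y).2.isRight) (hxy : (f x).1.val = (f y).1.val) : False := by
  obtain ⟨i, hi⟩ := Sum.isLeft_iff.1 hx
  obtain ⟨c, hc⟩ := Sum.isRight_iff.1 hy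
  have hne : x ≠ y := by rintro rfl; rw [hi] at hc; exact Sum.inl_ne_inr hc
  have h := hdisj x y hne
  rw [← Prod.mk.eta (p := f x), ← Prod.mk.eta (p := f y), hi, hc, Fin.ext hxy] at h
  exact not_disjoint_edge_row_col htr _ i c h

lemma avoidsRowsOf_of_col (htr : t ≤ r)
    (hdisj : ∀ x y, x ≠ y → Disjoint (edge (f x)) (edge (f y))) {y : Fin (s + 1)}
    (hy : (f y).2.isRight) : AvoidsRowsOf f (f y).1.val :=
  fun _ hx hxy => false_of_row_of_col htr hdisj hx hy hxy

lemma avoidsRowsOf_succ (htr : t ≤ r) (hf : ∀ x, colour (f x) = x)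
    (hdisj : ∀ x y, x ≠ y → Disjoint (edge (f x)) (edge (f y))) {g : ℕ}
    (hg : AvoidsRowsOf f g) (hroot : g + 1 ≠ t - 1) (hgs : g + 1 < s) :
    AvoidsRowsOf f (g + 1) := by
  set x : Fin (s + 1) := ⟨g + 1, by omega⟩
  rcases colour_eq_cases (by omega) hroot hgs (hf x) with ⟨hcol, hx⟩ | ⟨hrow, hx⟩
  · exact hx ▸ avoidsRowsOf_of_col htr hdisj hcol
  · exact absurd (by omega) (hg x hrow)

lemma false_of_avoidsRowsOf_root (htr : t ≤ r) (hts : t ≤ s) (hf : ∀ x, colour (f x) = x)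
    (hdisj : ∀ x y, x ≠ y → Disjoint (edge (f x)) (edge (f y)))
    (hroot : AvoidsRowsOf f (t - 1)) : False := by
  have hchain : ∀ m, t - 1 + m < s → AvoidsRowsOf f (t - 1 + m) := by
    intro m
    induction m with
    | zero => exact fun _ => hroot
    | succ m ih =>
      intro hm
      rw [← Nat.add_assoc] at hm ⊢
      exact avoidsRowsOf_succ htr hf hdisj (ih (by omega)) (by omega) hm
  obtain ⟨hrow, hγ⟩ := colour_eq_last_cases hts (hf (Fin.last s))
  exact hchain ((f (Fin.last s)).1.val - (t - 1)) (by omega) _ hrow (by omega)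

lemma false_of_row_root (htr : t ≤ r) (hf : ∀ x, colour (f x) = x)
    (hdisj : ∀ x y, x ≠ y → Disjoint (edge (f x)) (edge (f y))) {x₀ : Fin (s + 1)}
    (hx₀ : (f x₀).2.isLeft) (hroot : (f x₀).1.val = t - 1) : False := by
  have hchain : ∀ g, g < t - 1 → AvoidsRowsOf f g := by
    intro g
    induction g with
    | zero =>
      intro _
      obtain ⟨hcol, hγ | hγ⟩ := colour_eq_zero_cases (hf 0)
      · exact hγ ▸ avoidsRowsOf_of_col htr hdisj hcol
      · exact (false_of_row_of_col htr hdisj hx₀ hcol (hroot.trans hγ.symm)).elim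
    | succ g ih =>
      exact fun hg => avoidsRowsOf_succ htr hf hdisj (ih (by omega)) (by omega) (by omega)
  set y : Fin (s + 1) := ⟨t - 1, by omega⟩
  rcases colour_eq_root_cases (hf y) with ⟨hcol, hy⟩ | ⟨hrow, hy⟩
  · exact false_of_row_of_col htr hdisj hx₀ hcol (hroot.trans hy.symm)
  · exact hchain _ hy y hrow rfl

lemma not_hasFullRainbowMatching (htr : t ≤ r) (hts : t ≤ s) :
    ¬ hasFullRainbowMatching (edge (s := s) (r := r) (q := q)) (colourFin hts) := by
  rintro ⟨f, hf, hdisj⟩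
  replace hf : ∀ x, colour (f x) = x := fun x => congrArg Fin.val (hf x)
  by_cases hroot : AvoidsRowsOf f (t - 1)
  · exact false_of_avoidsRowsOf_root htr hts hf hdisj hroot
  · simp only [AvoidsRowsOf, not_forall, not_not] at hroot
    obtain ⟨x₀, hx₀, hγ⟩ := hroot
    exact false_of_row_root htr hf hdisj hx₀ hγ

end NoRainbowMatching

lemma le_classSize_of_injective {ι κ α : Type} [Fintype ι] [DecidableEq κ] [Fintype α]
    {c : ι → κ} {i : κ} {g : α → ι} (hg : Function.Injective g) (hc : ∀ a, c (g a) = i) :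
    Fintype.card α ≤ classSize c i := by
  rw [classSize, ← card_univ]
  exact card_le_card_of_injOn g (fun a _ => by simp [hc]) hg.injOn

section ClassSize

variable (hts : t ≤ r * q + t - 1)

lemma le_classSize_of_witness (ht : 1 ≤ t) {x : Fin (r * q + t - 1 + 1)}
    {g : Fin r × Fin q ⊕ Fin (t - 1) → Edge (r * q + t - 1) t r q} (hg : Function.Injective g)
    (hc : ∀ a, colour (g a) = x) :
    r * q + t - 1 ≤ classSize (colourFin (r := r) (q := q) hts) x := by
  have h := le_classSize_of_injective (c := colourFin hts) hg fun a => Fin.ext (hc a)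
  rw [Fintype.card_sum, Fintype.card_prod, Fintype.card_fin, Fintype.card_fin,
    Fintype.card_fin] at h
  omega

lemma le_classSize_last (ht : 1 ≤ t) :
    r * q + t - 1 ≤ classSize (colourFin (r := r) (q := q) hts) (Fin.last _) := by
  refine le_classSize_of_witness hts ht (g := Sum.elim
      (fun c => (⟨t - 1 + finProdFinEquiv c, by omega⟩, .inl ⟨t - 1, by omega⟩))
      (fun i => (⟨r * q + t - 2, by omega⟩, .inl ⟨i, by omega⟩))) ?_ ?_
  · refine Function.Injective.sumElim (fun c c' h => ?_) (fun i i' h => ?_) (fun c i h => ?_)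
    all_goals simp only [Prod.mk.injEq, Sum.inl.injEq, Fin.mk.injEq] at h
    · exact finProdFinEquiv.injective (Fin.ext (by omega))
    · exact Fin.ext h.2
    · omega
  · rintro (c | i)
    · simp [colour]
    · simp [colour]
      omega

lemma le_classSize_root (ht : 1 ≤ t) :
    r * q + t - 1 ≤ classSize (colourFin (r := r) (q := q) hts) ⟨t - 1, by omega⟩ := by
  refine le_classSize_of_witness hts ht (g := Sum.elim
      (fun c => if h : c.2.val = 0 ∧ c.1.val < t - 1
        then (⟨c.1, by omega⟩, .inl ⟨t - 1, by omega⟩) else (⟨t - 1, by omega⟩, .inr c))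
      (fun i => (⟨t - 2, by omega⟩, .inl ⟨i, by omega⟩))) ?_ ?_
  · refine Function.Injective.sumElim (fun c c' h => ?_) (fun i i' h => ?_) (fun c i h => ?_)
    · split_ifs at h with hc hc' hc'
      all_goals simp [Prod.ext_iff, Fin.ext_iff] at h
      · exact Prod.ext (Fin.ext h) (Fin.ext (by omega))
      · exact Prod.ext (Fin.ext h.1) (Fin.ext h.2)
    · simp only [Prod.mk.injEq, Sum.inl.injEq, Fin.mk.injEq] at h
      exact Fin.ext h.2
    · split_ifs at h <;> simp [Prod.ext_iff, Fin.ext_iff] at h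
      omega
  · rintro (c | i)
    · simp only [Sum.elim_inl]
      split_ifs with hc
      all_goals simp [colour]; omega
    · have := i.2
      simp [colour]
      omega

lemma le_classSize_zero (ht : 2 ≤ t) (htr : t ≤ r) (hq : 1 ≤ q) :
    r * q + t - 1 ≤ classSize (colourFin (r := r) (q := q) hts) 0 := by
  refine le_classSize_of_witness hts (by omega) (g := Sum.elim
      (fun c => (⟨0, by omega⟩, .inr c))
      (fun i => (⟨t - 1, by omega⟩, .inr (⟨i, by omega⟩, ⟨0, hq⟩)))) ?_ ?_
  · refine Function.Injective.sumElim (fun c c' h => ?_) (fun i i' h => ?_) (fun c i h => ?_)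
    all_goals simp [Prod.ext_iff, Fin.ext_iff] at h
    · exact Prod.ext (Fin.ext h.1) (Fin.ext h.2)
    · exact Fin.ext h
    · omega
  · rintro (c | i)
    · simp [colour]
      omega
    · simp [colour]

lemma le_classSize_of_ne (ht : 1 ≤ t) (x : Fin (r * q + t - 1 + 1)) (hx0 : x.val ≠ 0)
    (hx : x.val ≠ t - 1) (hxs : x.val ≠ r * q + t - 1) :
    r * q + t - 1 ≤ classSize (colourFin (r := r) (q := q) hts) x := by
  refine le_classSize_of_witness hts ht (g := Sum.elim
      (fun c => (⟨x, by omega⟩, .inr c))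
      (fun i => (⟨x - 1, by omega⟩, .inl ⟨i, by omega⟩))) ?_ ?_
  · refine Function.Injective.sumElim (fun c c' h => ?_) (fun i i' h => ?_) (fun c i h => ?_)
    all_goals simp [Prod.ext_iff, Fin.ext_iff] at h
    · exact Prod.ext (Fin.ext h.1) (Fin.ext h.2)
    · exact Fin.ext h
  · rintro (c | i)
    · simp [colour, hx]
    · simp [colour]
      omega

lemma le_classSize (ht : 1 ≤ t) (htr : t ≤ r) (hq : 1 ≤ q) (x : Fin (r * q + t - 1 + 1)) :
    r * q + t - 1 ≤ classSize (colourFin (r := r) (q := q) hts) x := by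
  obtain rfl | hlast := eq_or_ne x (Fin.last _)
  · exact le_classSize_last hts ht
  obtain rfl | hroot := eq_or_ne x ⟨t - 1, by omega⟩
  · exact le_classSize_root hts ht
  obtain rfl | hzero := eq_or_ne x 0
  · exact le_classSize_zero hts (by simp [Fin.ext_iff] at hroot; omega) htr hq
  · exact le_classSize_of_ne hts ht x (fun h => hzero (Fin.ext h))
      (fun h => hroot (Fin.ext h)) (fun h => hlast (Fin.ext h))

end ClassSize

lemma isCounterexample [NeZero r] (ht : 1 ≤ t) (htr : t ≤ r) (hq : 1 ≤ q)
    (hts : t ≤ r * q + t - 1) :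
    IsCounterexample r t (q + 1) (edge (s := r * q + t - 1) (t := t) (r := r) (q := q))
      (colourFin hts) := by
  refine ⟨card_edge, fun a b hab => card_edge_inter_le hab, ⟨Prod.snd, ?_⟩, ?_, ?_, ?_,
    not_hasFullRainbowMatching htr hts⟩
  · rintro a ⟨u, j⟩ hu ⟨v, j'⟩ hv huv rfl
    rw [mem_edge] at hu hv
    exact huv (by rw [← hu, ← hv])
  · rintro ⟨⟨γ, i | c⟩, j⟩
    · exact (mhDeg_row htr γ i j).le
    · exact (mhDeg_col_le γ c j).trans (by omega)
  · exact ⟨((⟨0, by omega⟩, .inl ⟨0, ht⟩), ⟨0, by omega⟩), mhDeg_row htr _ _ _⟩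
  · intro x
    rw [Nat.add_sub_cancel]
    exact le_classSize hts ht htr hq x

end RainbowGadget

open RainbowGadget in
/-- For all `1 ≤ t ≤ r` and `Δ ≥ 2` there is an edge-colored `t`-simple `r`-partite
`r`-graph with maximum degree `Δ`, all color classes of size at least `r(Δ-1)+t-1`,
and no full rainbow matching. -/
theorem stmt3 (t r Δ : ℕ) (ht : 1 ≤ t) (htr : t ≤ r) (hΔ : 2 ≤ Δ) :
    ∃ (N M n : ℕ) (E : Fin M → Finset (Fin N)) (c : Fin M → Fin n),
      (∀ a, (E a).card = r) ∧
      (∀ a b, a ≠ b → (E a ∩ E b).card ≤ t) ∧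
      (∃ P : Fin N → Fin r, ∀ a, ∀ u ∈ E a, ∀ v ∈ E a, u ≠ v → P u ≠ P v) ∧
      (∀ v, mhDeg E v ≤ Δ) ∧ (∃ v, mhDeg E v = Δ) ∧
      (∀ i : Fin n, r * (Δ - 1) + t - 1 ≤ classSize c i) ∧
      ¬ hasFullRainbowMatching E c := by
  have : NeZero r := ⟨by omega⟩
  obtain ⟨q, rfl⟩ : ∃ q, Δ = q + 1 := ⟨Δ - 1, by omega⟩
  have hrq : 1 ≤ r * q := Nat.mul_pos (by omega) (by omega)
  exact ⟨_, _, _, _, _, (isCounterexample ht htr (by omega) (by omega)).relabel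
    (Fintype.equivFin _) (Fintype.equivFin _)⟩
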